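/- Let H be a nonempty axis-aligned region in ℝ^{n₁}×⋯×ℝ^{n_k} and let M₁,…,M_m : ℝ^{n₁}×⋯×ℝ^{n_k} → ℝ be multilinear functions. Then the simultaneous hull conv{(x, M₁(x),…,M_m(x)) : x ∈ H} equals conv{(v, M₁(v),…,M_m(v)) : v ∈ corner(H)}. -/

import Mathlib

/-- `M` is multilinear in the block variables: fixing all blocks except the `j`-th yields an
affine map `ℝ^{n_j} → ℝ`. -/
def IsBlockMultilinear {k : ℕ} {n : Fin k → ℕ}
    (M : ((j : Fin k) → (Fin (n j) → ℝ)) → ℝ) : Prop :=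
  ∀ (j : Fin k) (x : (j : Fin k) → Fin (n j) → ℝ),
    ∃ A : (Fin (n j) → ℝ) →ᵃ[ℝ] ℝ, ∀ y : Fin (n j) → ℝ, M (Function.update x j y) = A y

/-- An axis-aligned region in `ℝ^{n₁} × ⋯ × ℝ^{n_k}`: a finite union of products of
polytopes (convex hulls of nonempty finite sets), one polytope per block. -/
def IsBlockAxisAligned {k : ℕ} {n : Fin k → ℕ}
    (H : Set ((j : Fin k) → Fin (n j) → ℝ)) : Prop :=
  ∃ (N : ℕ) (V : Fin N → (j : Fin k) → Finset (Fin (n j) → ℝ)),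
    (∀ i j, (V i j).Nonempty) ∧
    H = ⋃ i : Fin N, {x | ∀ j, x j ∈ convexHull ℝ ((V i j : Set (Fin (n j) → ℝ)))}

/-- The corner points of a region `H`: points of `H` each of whose block coordinates is an
extreme point of the convex hull of the corresponding slice of `H`. -/
def blockCornerSet {k : ℕ} {n : Fin k → ℕ}
    (H : Set ((j : Fin k) → Fin (n j) → ℝ)) : Set ((j : Fin k) → Fin (n j) → ℝ) :=
  {v | v ∈ H ∧ ∀ j, v j ∈ Set.extremePoints ℝ
    (convexHull ℝ {y : Fin (n j) → ℝ | Function.update v j y ∈ H})}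

/-!
Write `g x = (x, M₁ x, …, M_m x)`. Along every block direction `g` is affine, so on a product of
polytopes `g` lies in the convex hull of its values on the product of their vertex sets; hence the
simultaneous hull over `H` is the convex hull of `g` over a finite grid `G ⊆ H`, a polytope, which
is the convex hull of its extreme points. An extreme point `g v` must have each block `v j` extreme
in its slice of `H`: otherwise moving `v j` along a segment of the slice moves `g v` affinely along
a segment of the hull. So every extreme point comes from a corner point.
-/

open Set Function

section BlockAffine

variable {ι : Type*} [DecidableEq ι] {E : ι → Type*} [∀ j, AddCommGroup (E j)]
  [∀ j, Module ℝ (E j)] {F : Type*} [AddCommGroup F] [Module ℝ F]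

def updateAffineMap (x : ∀ j, E j) (j : ι) : E j →ᵃ[ℝ] ∀ j, E j where
  toFun := update x j
  linear := LinearMap.single ℝ E j
  map_vadd' y v := by
    funext j'
    by_cases h : j' = j
    · subst h
      simp
    · simp [update_of_ne h, Pi.single_eq_of_ne h]

def IsBlockAffine (g : (∀ j, E j) → F) : Prop :=
  ∀ j x, ∃ A : E j →ᵃ[ℝ] F, ∀ y, g (update x j y) = A y

theorem isBlockAffine_graph {m : Type*} {M : m → (∀ j, E j) → ℝ}
    (hM : ∀ i, IsBlockAffine (M i)) : IsBlockAffine fun x => (x, fun i => M i x) := by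
  intro j x
  choose A hA using fun i => hM i j x
  exact ⟨(updateAffineMap x j).prod (AffineMap.pi A), fun y => Prod.ext rfl (funext (hA · y))⟩

theorem IsBlockAffine.mem_convexHull_image_pi [Fintype ι] {g : (∀ j, E j) → F}
    (hg : IsBlockAffine g) (V : ∀ j, Set (E j)) {x : ∀ j, E j}
    (hx : ∀ j, x j ∈ convexHull ℝ (V j)) : g x ∈ convexHull ℝ (g '' univ.pi V) := by
  -- induction on the set `S` of blocks of `x` not yet known to be vertices
  suffices ∀ (S : Finset ι) (x : ∀ j, E j), (∀ j, x j ∈ convexHull ℝ (V j)) →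
      (∀ j ∉ S, x j ∈ V j) → g x ∈ convexHull ℝ (g '' univ.pi V) from
    this Finset.univ x hx (by simp)
  intro S
  induction S using Finset.induction_on with
  | empty => exact fun x _ hV => subset_convexHull ℝ _ ⟨x, fun j _ => hV j (by simp), rfl⟩
  | insert j S _ ih =>
    intro x hx hV
    obtain ⟨A, hA⟩ := hg j x
    have hA_vertices : A '' V j ⊆ convexHull ℝ (g '' univ.pi V) := by
      rintro _ ⟨y, hy, rfl⟩
      rw [← hA]
      refine ih _ (fun j' => ?_) (fun j' hj' => ?_)
      · rcases eq_or_ne j' j with rfl | h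
        · simpa using subset_convexHull ℝ _ hy
        · simpa [update_of_ne h] using hx j'
      · rcases eq_or_ne j' j with rfl | h
        · simpa using hy
        · simpa [update_of_ne h] using hV j' (by simp [h, hj'])
    have hAx : A (x j) ∈ convexHull ℝ (A '' V j) := by
      rw [← A.image_convexHull]
      exact mem_image_of_mem A (hx j)
    rw [← update_eq_self j x, hA]
    exact convexHull_min hA_vertices (convex_convexHull ℝ _) hAx

theorem IsBlockAffine.mem_extremePoints_slice {g : (∀ j, E j) → F} (hg : IsBlockAffine g)
    (hinj : Injective g) {H : Set (∀ j, E j)} {v : ∀ j, E j} (hv : v ∈ H)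
    (he : g v ∈ extremePoints ℝ (convexHull ℝ (g '' H))) (j : ι) :
    v j ∈ extremePoints ℝ (convexHull ℝ {y | update v j y ∈ H}) := by
  obtain ⟨A, hA⟩ := hg j v
  have hAv : A (v j) = g v := by rw [← hA, update_eq_self]
  have hA_hull : A '' convexHull ℝ {y | update v j y ∈ H} ⊆ convexHull ℝ (g '' H) := by
    rw [A.image_convexHull]
    refine convexHull_mono ?_
    rintro _ ⟨y, hy, rfl⟩
    exact ⟨_, hy, hA y⟩
  have hA_eq : ∀ y, A y = g v → y = v j := fun y hy => by
    simpa using congrFun (hinj ((hA y).trans hy)) j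
  refine mem_extremePoints.2
    ⟨subset_convexHull ℝ _ (by simpa using hv), fun y₁ hy₁ y₂ hy₂ hseg => ?_⟩
  have hAseg : g v ∈ openSegment ℝ (A y₁) (A y₂) := by
    rw [← hAv, ← image_openSegment]
    exact mem_image_of_mem A hseg
  obtain ⟨h₁, h₂⟩ :=
    (mem_extremePoints.1 he).2 _ (hA_hull ⟨y₁, hy₁, rfl⟩) _ (hA_hull ⟨y₂, hy₂, rfl⟩) hAseg
  exact ⟨hA_eq y₁ h₁, hA_eq y₂ h₂⟩

end BlockAffine

theorem Set.Finite.convexHull_extremePoints_convexHull {F : Type*} [AddCommGroup F]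
    [Module ℝ F] [TopologicalSpace F] [T2Space F] [IsTopologicalAddGroup F] [ContinuousSMul ℝ F]
    [LocallyConvexSpace ℝ F] {s : Set F} (hs : s.Finite) :
    convexHull ℝ (extremePoints ℝ (convexHull ℝ s)) = convexHull ℝ s := by
  have hfin : (extremePoints ℝ (convexHull ℝ s)).Finite :=
    hs.subset extremePoints_convexHull_subset
  rw [← (hfin.isClosed_convexHull ℝ).closure_eq,
    closure_convexHull_extremePoints (hs.isCompact_convexHull ℝ) (convex_convexHull ℝ s)]

theorem IsBlockAxisAligned.exists_finite_subset_image_subset_convexHull {k : ℕ} {n : Fin k → ℕ}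
    {H : Set ((j : Fin k) → Fin (n j) → ℝ)} (hH : IsBlockAxisAligned H) {F : Type*}
    [AddCommGroup F] [Module ℝ F] {g : ((j : Fin k) → Fin (n j) → ℝ) → F}
    (hg : IsBlockAffine g) : ∃ G ⊆ H, G.Finite ∧ g '' H ⊆ convexHull ℝ (g '' G) := by
  obtain ⟨N, V, -, rfl⟩ := hH
  let grid i : Set ((j : Fin k) → Fin (n j) → ℝ) := univ.pi fun j => (V i j : Set _)
  refine ⟨⋃ i, grid i, ?_, ?_, ?_⟩
  · exact iUnion_mono fun i x hx j => subset_convexHull ℝ _ (hx j trivial)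
  · exact finite_iUnion fun i => Set.Finite.pi fun j => (V i j).finite_toSet
  · rintro _ ⟨x, hx, rfl⟩
    obtain ⟨i, hx⟩ := mem_iUnion.1 hx
    exact convexHull_mono (image_mono (subset_iUnion grid i)) (hg.mem_convexHull_image_pi _ hx)

theorem simultaneous_hull_of_multilinears_corner_generated_general
    (k : ℕ) (n : Fin k → ℕ)
    (H : Set ((j : Fin k) → Fin (n j) → ℝ))
    (hH : IsBlockAxisAligned H)
    (m : ℕ) (M : Fin m → ((j : Fin k) → (Fin (n j) → ℝ)) → ℝ)
    (hM : ∀ i, IsBlockMultilinear (M i)) :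
    convexHull ℝ
        ((fun x : (j : Fin k) → Fin (n j) → ℝ => (x, fun i : Fin m => M i x)) '' H) =
      convexHull ℝ
        ((fun v : (j : Fin k) → Fin (n j) → ℝ => (v, fun i : Fin m => M i v)) ''
          blockCornerSet H) := by
  set g := fun x : (j : Fin k) → Fin (n j) → ℝ => (x, fun i : Fin m => M i x)
  have hg : IsBlockAffine g := isBlockAffine_graph hM
  have hinj : Injective g := fun x y h => congrArg Prod.fst h
  obtain ⟨G, hGH, hGfin, hHG⟩ := hH.exists_finite_subset_image_subset_convexHull hg
  have hull_eq : convexHull ℝ (g '' H) = convexHull ℝ (g '' G) :=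
    (convexHull_min hHG (convex_convexHull ℝ _)).antisymm (convexHull_mono (image_mono hGH))
  refine (convexHull_mono (image_mono fun v hv => hv.1)).antisymm' ?_
  rw [hull_eq, ← (hGfin.image g).convexHull_extremePoints_convexHull]
  refine convexHull_mono fun _ he => ?_
  obtain ⟨v, hvG, rfl⟩ := extremePoints_convexHull_subset he
  rw [← hull_eq] at he
  exact ⟨v, ⟨hGH hvG, hg.mem_extremePoints_slice hinj (hGH hvG) he⟩, rfl⟩

/-- The simultaneous convex hull of finitely many multilinear functions over a nonempty
axis-aligned region `H` equals the convex hull of their simultaneous graph points over the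
corner points of `H`. -/
theorem simultaneous_hull_of_multilinears_corner_generated
    (k : ℕ) (hk : 0 < k) (n : Fin k → ℕ) (hn : ∀ j, 0 < n j)
    (H : Set ((j : Fin k) → Fin (n j) → ℝ)) (hne : H.Nonempty)
    (hH : IsBlockAxisAligned H)
    (m : ℕ) (M : Fin m → ((j : Fin k) → (Fin (n j) → ℝ)) → ℝ)
    (hM : ∀ i, IsBlockMultilinear (M i)) :
    convexHull ℝ
        ((fun x : (j : Fin k) → Fin (n j) → ℝ => (x, fun i : Fin m => M i x)) '' H) =
      convexHull ℝ
        ((fun v : (j : Fin k) → Fin (n j) → ℝ => (v, fun i : Fin m => M i v)) ''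
          blockCornerSet H) :=
  simultaneous_hull_of_multilinears_corner_generated_general k n H hH m M hM
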